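/- Let X be a real normed space, H a real Hilbert space, 0 < α < 1, and f : X → H a map satisfying ‖f(x) − f(y)‖ ≤ ‖x−y‖^α for all x, y ∈ X. Let μ be an invariant mean on the additive group of X and define g : X → ℝ by g(x) = μ(y ↦ ‖f(y+x) − f(y)‖²). Then for all a, b ∈ X: |g(a) − g(b)| ≤ ‖a−b‖^α · (‖a‖^α + ‖b‖^α). In particular, g is continuous. -/

import Mathlib

/-- A bounded real-valued function on `X`. -/
def IsBddFun {X : Type*} (h : X → ℝ) : Prop := ∃ M : ℝ, ∀ y, |h y| ≤ M

/-- An invariant mean on the (discrete) abelian group `X`: a positive, normalized,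
translation-invariant linear functional on the space of bounded real-valued functions
on `X`. -/
structure InvariantMean (X : Type*) [AddCommGroup X] where
  toFun : (X → ℝ) → ℝ
  map_add' : ∀ h₁ h₂ : X → ℝ, IsBddFun h₁ → IsBddFun h₂ →
    toFun (h₁ + h₂) = toFun h₁ + toFun h₂
  map_smul' : ∀ (c : ℝ) (h : X → ℝ), IsBddFun h → toFun (c • h) = c * toFun h
  nonneg' : ∀ h : X → ℝ, IsBddFun h → (∀ y, 0 ≤ h y) → 0 ≤ toFun h
  norm_one' : toFun (fun _ => 1) = 1
  invariant' : ∀ h : X → ℝ, IsBddFun h → ∀ x : X, toFun (fun y => h (y + x)) = toFun h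

/-! The Hölder bound is a pointwise estimate pushed through the mean: for every `y`,
`‖f (y+a) − f y‖² − ‖f (y+b) − f y‖²` factors as a difference of norms, at most
`‖a−b‖^α` by the Hölder condition at `y+a, y+b`, times a sum of norms, at most
`‖a‖^α + ‖b‖^α`; a positive normalized mean preserves such two-sided bounds.
Continuity follows because the bound tends to `0` as `a → b`, using `α > 0`. -/

section IsBddFun

variable {X : Type*}

lemma IsBddFun.add {h₁ h₂ : X → ℝ} (b₁ : IsBddFun h₁) (b₂ : IsBddFun h₂) :
    IsBddFun (h₁ + h₂) := by
  obtain ⟨M₁, hM₁⟩ := b₁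
  obtain ⟨M₂, hM₂⟩ := b₂
  exact ⟨M₁ + M₂, fun y => (abs_add_le _ _).trans (add_le_add (hM₁ y) (hM₂ y))⟩

lemma IsBddFun.const_smul (c : ℝ) {h : X → ℝ} (b : IsBddFun h) : IsBddFun (c • h) := by
  obtain ⟨M, hM⟩ := b
  refine ⟨|c| * M, fun y => ?_⟩
  rw [Pi.smul_apply, smul_eq_mul, abs_mul]
  exact mul_le_mul_of_nonneg_left (hM y) (abs_nonneg c)

lemma isBddFun_const (c : ℝ) : IsBddFun (fun _ : X => c) :=
  ⟨|c|, fun _ => le_rfl⟩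

lemma IsBddFun.add_const {h : X → ℝ} (b : IsBddFun h) (c : ℝ) :
    IsBddFun (h + fun _ => c) :=
  b.add (isBddFun_const c)

end IsBddFun

namespace InvariantMean

variable {X : Type*} [AddCommGroup X] (μ : InvariantMean X)

lemma map_const (c : ℝ) : μ.toFun (fun _ => c) = c := by
  have : (fun _ : X => c) = c • (fun _ : X => (1 : ℝ)) := by
    funext; simp
  rw [this, μ.map_smul' _ _ (isBddFun_const 1), μ.norm_one', mul_one]

lemma map_add_const {h : X → ℝ} (b : IsBddFun h) (c : ℝ) :
    μ.toFun (h + fun _ => c) = μ.toFun h + c := by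
  rw [μ.map_add' _ _ b (isBddFun_const c), μ.map_const]

lemma mono {p q : X → ℝ} (bp : IsBddFun p) (bq : IsBddFun q) (hpq : ∀ y, p y ≤ q y) :
    μ.toFun p ≤ μ.toFun q := by
  have hdiff : μ.toFun (q + (-1 : ℝ) • p) = μ.toFun q - μ.toFun p := by
    rw [μ.map_add' _ _ bq (bp.const_smul _), μ.map_smul' _ _ bp]
    ring
  have hnonneg : 0 ≤ μ.toFun (q + (-1 : ℝ) • p) :=
    μ.nonneg' _ (bq.add (bp.const_smul _)) fun y => by
      simp only [Pi.add_apply, Pi.smul_apply, smul_eq_mul]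
      linarith [hpq y]
  linarith

lemma abs_sub_le {h₁ h₂ : X → ℝ} (b₁ : IsBddFun h₁) (b₂ : IsBddFun h₂) {C : ℝ}
    (hC : ∀ y, |h₁ y - h₂ y| ≤ C) : |μ.toFun h₁ - μ.toFun h₂| ≤ C := by
  have upper : μ.toFun h₁ ≤ μ.toFun h₂ + C := by
    rw [← μ.map_add_const b₂]
    exact μ.mono b₁ (b₂.add_const C) fun y => by
      simp only [Pi.add_apply]; linarith [(abs_le.mp (hC y)).2]
  have lower : μ.toFun h₂ + -C ≤ μ.toFun h₁ := by
    rw [← μ.map_add_const b₂]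
    exact μ.mono (b₂.add_const (-C)) b₁ fun y => by
      simp only [Pi.add_apply]; linarith [(abs_le.mp (hC y)).1]
  rw [abs_le]
  constructor <;> linarith

end InvariantMean

lemma abs_sq_norm_sub_sq_norm_le {E : Type*} [SeminormedAddCommGroup E] (u v : E) :
    |‖u‖ ^ 2 - ‖v‖ ^ 2| ≤ ‖u - v‖ * (‖u‖ + ‖v‖) := by
  have hfactor : ‖u‖ ^ 2 - ‖v‖ ^ 2 = (‖u‖ - ‖v‖) * (‖u‖ + ‖v‖) := by ring
  rw [hfactor, abs_mul, abs_of_nonneg (by positivity : 0 ≤ ‖u‖ + ‖v‖)]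
  exact mul_le_mul_of_nonneg_right (abs_norm_sub_norm_le u v) (by positivity)

section Holder

variable {X H : Type*} [SeminormedAddCommGroup X] [SeminormedAddCommGroup H]
  {α : ℝ} {f : X → H}

lemma norm_sub_le_rpow_of_holder (hf : ∀ x y : X, ‖f x - f y‖ ≤ ‖x - y‖ ^ α) (x y : X) :
    ‖f (y + x) - f y‖ ≤ ‖x‖ ^ α := by
  simpa using hf (y + x) y

lemma isBddFun_sq_norm_sub_of_holder (hf : ∀ x y : X, ‖f x - f y‖ ≤ ‖x - y‖ ^ α) (x : X) :
    IsBddFun (fun y => ‖f (y + x) - f y‖ ^ 2) := by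
  refine ⟨(‖x‖ ^ α) ^ 2, fun y => ?_⟩
  rw [abs_of_nonneg (by positivity)]
  exact pow_le_pow_left₀ (norm_nonneg _) (norm_sub_le_rpow_of_holder hf x y) 2

lemma abs_sq_norm_sub_sub_sq_norm_sub_le_of_holder
    (hf : ∀ x y : X, ‖f x - f y‖ ≤ ‖x - y‖ ^ α) (a b y : X) :
    |‖f (y + a) - f y‖ ^ 2 - ‖f (y + b) - f y‖ ^ 2| ≤ ‖a - b‖ ^ α * (‖a‖ ^ α + ‖b‖ ^ α) := by
  have hdiff : ‖(f (y + a) - f y) - (f (y + b) - f y)‖ ≤ ‖a - b‖ ^ α := by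
    simpa using hf (y + a) (y + b)
  refine (abs_sq_norm_sub_sq_norm_le _ _).trans
    (mul_le_mul hdiff ?_ (by positivity) (by positivity))
  exact add_le_add (norm_sub_le_rpow_of_holder hf a y) (norm_sub_le_rpow_of_holder hf b y)

end Holder

lemma continuous_of_abs_sub_le_rpow_mul {X : Type*} [SeminormedAddCommGroup X]
    {α : ℝ} (hα : 0 < α) {g : X → ℝ}
    (hg : ∀ a b, |g a - g b| ≤ ‖a - b‖ ^ α * (‖a‖ ^ α + ‖b‖ ^ α)) : Continuous g := by
  refine continuous_iff_continuousAt.mpr fun b => ?_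
  have hbound : Filter.Tendsto (fun a => ‖a - b‖ ^ α * (‖a‖ ^ α + ‖b‖ ^ α))
      (nhds b) (nhds 0) := by
    have hcont : Continuous fun a : X => ‖a - b‖ ^ α * (‖a‖ ^ α + ‖b‖ ^ α) := by
      have := Real.continuous_rpow_const hα.le
      fun_prop
    simpa [Real.zero_rpow hα.ne'] using hcont.tendsto b
  exact tendsto_iff_norm_sub_tendsto_zero.mpr
    (squeeze_zero (fun _ => norm_nonneg _) (fun a => hg a b) hbound)

theorem invariant_mean_average_is_holder_general
    (X : Type*) [NormedAddCommGroup X]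
    (H : Type*) [NormedAddCommGroup H]
    (α : ℝ) (hα₀ : 0 < α)
    (f : X → H) (hf : ∀ x y : X, ‖f x - f y‖ ≤ ‖x - y‖ ^ α)
    (μ : InvariantMean X) :
    let g : X → ℝ := fun x => μ.toFun (fun y => ‖f (y + x) - f y‖ ^ 2)
    (∀ a b : X, |g a - g b| ≤ ‖a - b‖ ^ α * (‖a‖ ^ α + ‖b‖ ^ α)) ∧ Continuous g := by
  intro g
  have holder : ∀ a b : X, |g a - g b| ≤ ‖a - b‖ ^ α * (‖a‖ ^ α + ‖b‖ ^ α) := fun a b =>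
    μ.abs_sub_le (isBddFun_sq_norm_sub_of_holder hf a) (isBddFun_sq_norm_sub_of_holder hf b)
      (abs_sq_norm_sub_sub_sq_norm_sub_le_of_holder hf a b)
  exact ⟨holder, continuous_of_abs_sub_le_rpow_mul hα₀ holder⟩

/-- **Hölder continuity of the averaged function.**
If `f : X → H` satisfies `‖f x − f y‖ ≤ ‖x−y‖^α` (`0 < α < 1`) and `μ` is an invariant
mean on `X`, then `g x = μ (y ↦ ‖f (y+x) − f y‖²)` satisfies
`|g a − g b| ≤ ‖a−b‖^α (‖a‖^α + ‖b‖^α)`; in particular `g` is continuous. -/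
theorem invariant_mean_average_is_holder
    (X : Type*) [NormedAddCommGroup X] [NormedSpace ℝ X]
    (H : Type*) [NormedAddCommGroup H] [InnerProductSpace ℝ H]
    (α : ℝ) (hα₀ : 0 < α) (hα₁ : α < 1)
    (f : X → H) (hf : ∀ x y : X, ‖f x - f y‖ ≤ ‖x - y‖ ^ α)
    (μ : InvariantMean X) :
    let g : X → ℝ := fun x => μ.toFun (fun y => ‖f (y + x) - f y‖ ^ 2)
    (∀ a b : X, |g a - g b| ≤ ‖a - b‖ ^ α * (‖a‖ ^ α + ‖b‖ ^ α)) ∧ Continuous g :=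
  invariant_mean_average_is_holder_general X H α hα₀ f hf μ
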